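/- arXiv:2207.04024 — 2 statements merged into one kernel-verified Lean document; each statement's English description precedes it below -/
import Mathlib

section
/- Let G be a locally finite, connected metric graph and let K be a closed subspace of H^1(G). Then the embedding of K into L^2(G) is compact if and only if for every ε > 0 there exists a compact (finite) subgraph G_c of G such that ‖f‖_{L^2(G \ G_c)} ≤ ε holds for every f ∈ K with ‖f‖_{H^1(G)} ≤ 1. -/
open MeasureTheory Set Filter
open scoped ENNReal

/-- A metric graph structure on a metric space `X`: a countable collection of edges,
each parametrised by arc length over `[0, len e]`, together with vertices identified
with edge endpoints; the interiors of distinct edges are disjoint, the edges cover `X`,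
and the metric of `X` is the induced path metric (characterised by the fact that the
edge parametrisations are `1`-Lipschitz and `dist x y` is the largest value `u x - u y`
over all continuous, edgewise `1`-Lipschitz functions `u : X → ℝ`). -/
structure MetricGraphOn (X : Type) [MetricSpace X] where
  V : Type
  E : Type
  countableV : Countable V
  countableE : Countable E
  len : E → ℝ
  len_pos : ∀ e, 0 < len e
  edgeMap : E → ℝ → X
  vertexMap : V → X
  endpoint : E → Bool → V
  edgeMap_cont : ∀ e, ContinuousOn (edgeMap e) (Icc 0 (len e))
  edgeMap_injOn : ∀ e, InjOn (edgeMap e) (Ico 0 (len e))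
  edgeMap_zero : ∀ e, edgeMap e 0 = vertexMap (endpoint e false)
  edgeMap_len : ∀ e, edgeMap e (len e) = vertexMap (endpoint e true)
  interior_disjoint : ∀ e e', e ≠ e' → ∀ s ∈ Ioo 0 (len e), ∀ t ∈ Ioo 0 (len e'),
    edgeMap e s ≠ edgeMap e' t
  interior_not_vertex : ∀ e, ∀ s ∈ Ioo 0 (len e), ∀ v, edgeMap e s ≠ vertexMap v
  vertexMap_inj : Function.Injective vertexMap
  cover : ∀ x : X, ∃ e, ∃ t ∈ Icc 0 (len e), edgeMap e t = x
  dist_le : ∀ e, ∀ s ∈ Icc 0 (len e), ∀ t ∈ Icc 0 (len e),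
    dist (edgeMap e s) (edgeMap e t) ≤ |s - t|
  dist_ge : ∀ u : X → ℝ, Continuous u →
    (∀ e, ∀ s ∈ Icc 0 (len e), ∀ t ∈ Icc 0 (len e),
      |u (edgeMap e s) - u (edgeMap e t)| ≤ |s - t|) →
    ∀ x y, u x - u y ≤ dist x y

namespace MetricGraphOn

variable {X : Type} [MetricSpace X]

/-- The (a.e. defined) derivative of `f` along the edge `e`, in the arc-length
parametrisation of the edge. -/
noncomputable def edgeDeriv (G : MetricGraphOn X) (f : X → ℝ) (e : G.E) : ℝ → ℝ :=
  deriv (f ∘ G.edgeMap e)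

/-- The subset of `X` consisting of the (closed) edges in `A`. -/
def subgraphSet (G : MetricGraphOn X) (A : Set G.E) : Set X :=
  ⋃ e ∈ A, G.edgeMap e '' Icc 0 (G.len e)

/-- `∫_e |f|²` along a single edge. -/
noncomputable def edgeMass (G : MetricGraphOn X) (f : X → ℝ) (e : G.E) : ℝ :=
  ∫ t in Ioo 0 (G.len e), (f (G.edgeMap e t)) ^ 2

/-- `∫_e |f'|²` along a single edge. -/
noncomputable def edgeEnergy (G : MetricGraphOn X) (f : X → ℝ) (e : G.E) : ℝ :=
  ∫ t in Ioo 0 (G.len e), (G.edgeDeriv f e t) ^ 2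

/-- Membership in the Sobolev space `H¹` of the subgraph given by the edge set `A`:
continuity on the subgraph, edgewise absolute continuity with square-integrable
derivative, and finiteness of the total `H¹` norm. -/
def MemH1On (G : MetricGraphOn X) (A : Set G.E) (f : X → ℝ) : Prop :=
  ContinuousOn f (G.subgraphSet A) ∧
  (∀ e ∈ A, IntegrableOn (fun t => (G.edgeDeriv f e t) ^ 2) (Ioo 0 (G.len e))) ∧
  (∀ e ∈ A, ∀ t ∈ Icc (0:ℝ) (G.len e),
    f (G.edgeMap e t) = f (G.edgeMap e 0) + ∫ s in Ioo 0 t, G.edgeDeriv f e s) ∧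
  Summable (fun e : A => G.edgeMass f (e : G.E) + G.edgeEnergy f (e : G.E))

/-- Membership in `H¹(G)`. -/
def MemH1 (G : MetricGraphOn X) (f : X → ℝ) : Prop :=
  Continuous f ∧ G.MemH1On Set.univ f

/-- The squared `L²` norm of `f` over the edges in `A`. -/
noncomputable def l2normSqOn (G : MetricGraphOn X) (A : Set G.E) (f : X → ℝ) : ℝ :=
  ∑' e : A, G.edgeMass f (e : G.E)

/-- The squared `L²` norm of `f'` over the edges in `A`. -/
noncomputable def derivNormSqOn (G : MetricGraphOn X) (A : Set G.E) (f : X → ℝ) : ℝ :=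
  ∑' e : A, G.edgeEnergy f (e : G.E)

/-- The squared `L²` norm of `f` on `G`. -/
noncomputable def l2normSq (G : MetricGraphOn X) (f : X → ℝ) : ℝ :=
  G.l2normSqOn Set.univ f

/-- The squared `L²` norm of `f'` on `G` (the Dirichlet energy of `f`). -/
noncomputable def derivNormSq (G : MetricGraphOn X) (f : X → ℝ) : ℝ :=
  G.derivNormSqOn Set.univ f

/-- The squared `H¹` norm of `f`. -/
noncomputable def h1normSq (G : MetricGraphOn X) (f : X → ℝ) : ℝ :=
  G.l2normSq f + G.derivNormSq f

/-- The `L²` inner product on `G`. -/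
noncomputable def l2inner (G : MetricGraphOn X) (f g : X → ℝ) : ℝ :=
  ∑' e : G.E, ∫ t in Ioo 0 (G.len e), f (G.edgeMap e t) * g (G.edgeMap e t)

/-- The Dirichlet form (inner product of derivatives) on `G`. -/
noncomputable def derivInner (G : MetricGraphOn X) (f g : X → ℝ) : ℝ :=
  ∑' e : G.E, ∫ t in Ioo 0 (G.len e), G.edgeDeriv f e t * G.edgeDeriv g e t

/-- The `k`-th min-max (Courant–Fischer) value of the quadratic form
`f ↦ ∫ |f'|²` (over the edges of `A`) with form domain `K`: the infimum over all
`k`-dimensional subspaces of `K` of the largest Rayleigh quotient on the subspace.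
For a self-adjoint Laplacian with purely discrete spectrum this is its `k`-th
eigenvalue (`k = 1` giving the lowest one). -/
noncomputable def eigenOn (G : MetricGraphOn X) (A : Set G.E) (K : Set (X → ℝ))
    (k : ℕ) : ℝ :=
  sInf { μ : ℝ | ∃ φ : Fin k → X → ℝ, (∀ i, φ i ∈ K) ∧
    LinearIndependent ℝ (fun i => (G.subgraphSet A).restrict (φ i)) ∧
    ∀ c : Fin k → ℝ,
      G.derivNormSqOn A (∑ i, c i • φ i) ≤ μ * G.l2normSqOn A (∑ i, c i • φ i) }

/-- The `k`-th eigenvalue `μ_k(G)` of the Neumann extension (standard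
continuity–Kirchhoff conditions at all vertices, Neumann conditions at all ends). -/
noncomputable def neumannEigen (G : MetricGraphOn X) (k : ℕ) : ℝ :=
  G.eigenOn Set.univ {f | G.MemH1 f} k

/-- `f` vanishes at the point `y` of the completion of `X`. -/
def VanishesAt (f : X → ℝ) (y : UniformSpace.Completion X) : Prop :=
  Tendsto f (comap ((↑) : X → UniformSpace.Completion X) (nhds y)) (nhds 0)

/-- Membership in `H¹₀(G; 𝔙)`: `H¹`-functions vanishing on the set `𝔙` of
vertices and/or ends (viewed inside the completion of `X`). -/
def H10Mem (G : MetricGraphOn X) (𝔙 : Set (UniformSpace.Completion X))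
    (f : X → ℝ) : Prop :=
  G.MemH1 f ∧ ∀ y ∈ 𝔙, VanishesAt f y

/-- The `k`-th eigenvalue `λ_k(G; 𝔙)` of the Laplacian with Dirichlet conditions
on `𝔙` and standard (continuity–Kirchhoff/Neumann) conditions elsewhere. -/
noncomputable def dirichletEigen (G : MetricGraphOn X)
    (𝔙 : Set (UniformSpace.Completion X)) (k : ℕ) : ℝ :=
  G.eigenOn Set.univ {f | G.H10Mem 𝔙 f} k

/-- The set of (topological = graph) ends of `G`, realised as the points of the
completion of `X` that do not belong to `X`. -/
def Ends (_G : MetricGraphOn X) : Set (UniformSpace.Completion X) :=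
  {y | y ∉ Set.range ((↑) : X → UniformSpace.Completion X)}

/-- The set of vertices of `G`, viewed inside the completion of `X`. -/
def vertexPoints (G : MetricGraphOn X) : Set (UniformSpace.Completion X) :=
  Set.range (fun v => ((G.vertexMap v : X) : UniformSpace.Completion X))

/-- The degree of a vertex (loops counted twice). -/
noncomputable def degree (G : MetricGraphOn X) (v : G.V) : ℕ :=
  {p : G.E × Bool | G.endpoint p.1 p.2 = v}.ncard

/-- `G` is locally finite: every vertex has finite degree. -/
def LocallyFinite (G : MetricGraphOn X) : Prop :=
  ∀ v : G.V, {p : G.E × Bool | G.endpoint p.1 p.2 = v}.Finite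

/-- A cycle in `G`: a compact subset homeomorphic to a circle. -/
def IsCycle (_G : MetricGraphOn X) (C : Set X) : Prop :=
  IsCompact C ∧ Nonempty (C ≃ₜ Metric.sphere (0 : ℝ × ℝ) 1)

/-- `G` has (first) Betti number `β`: there is a minimal finite family of `β` cycles
whose union contains every cycle of `G`. -/
def HasBettiNumber (G : MetricGraphOn X) (β : ℕ) : Prop :=
  ∃ 𝒞 : Finset (Set X), 𝒞.card = β ∧ (∀ C ∈ 𝒞, G.IsCycle C) ∧
    (∀ C, G.IsCycle C → C ⊆ ⋃ C' ∈ 𝒞, C') ∧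
    ∀ 𝒞' : Finset (Set X), (∀ C ∈ 𝒞', G.IsCycle C) →
      (∀ C, G.IsCycle C → C ⊆ ⋃ C' ∈ 𝒞', C') → β ≤ 𝒞'.card

/-- The embedding of `K ⊆ H¹(G)` into `L²(G)` is compact: every sequence in `K`
bounded in the `H¹` norm has a subsequence which is Cauchy in the `L²` norm. -/
def CompactlyEmbedded (G : MetricGraphOn X) (K : Set (X → ℝ)) : Prop :=
  ∀ u : ℕ → X → ℝ, (∀ n, u n ∈ K) → (∀ n, G.h1normSq (u n) ≤ 1) →
    ∃ φ : ℕ → ℕ, StrictMono φ ∧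
      ∀ ε : ℝ, 0 < ε → ∃ N, ∀ m, N ≤ m → ∀ n, N ≤ n →
        G.l2normSq (u (φ m) - u (φ n)) ≤ ε

/-- The self-adjoint operator with form `f ↦ ∫ |f'|²` and form domain `K` has
purely discrete spectrum (equivalently, compact resolvent): its min-max values
tend to `+∞`. -/
def HasPurelyDiscreteSpectrumOn (G : MetricGraphOn X) (K : Set (X → ℝ)) : Prop :=
  Tendsto (fun k => G.eigenOn Set.univ K k) atTop atTop

/-- The volume (total length) of a subset `S` of `G`. -/
noncomputable def vol (G : MetricGraphOn X) (S : Set X) : ℝ≥0∞ :=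
  ∑' e : G.E, volume (G.edgeMap e ⁻¹' S ∩ Ioo 0 (G.len e))

/-- The set of vertices incident to some edge in `A`. -/
def vertexSetOf (G : MetricGraphOn X) (A : Set G.E) : Set G.V :=
  {v | ∃ e ∈ A, ∃ b, G.endpoint e b = v}

/-- Membership in `H¹₀(G)`, the closure in `H¹(G)` of the compactly supported
`H¹` functions (the form domain of the Friedrichs extension). -/
def H100Mem (G : MetricGraphOn X) (f : X → ℝ) : Prop :=
  G.MemH1 f ∧ ∃ u : ℕ → X → ℝ, (∀ n, G.MemH1 (u n) ∧ HasCompactSupport (u n)) ∧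
    Tendsto (fun n => G.h1normSq (f - u n)) atTop (nhds 0)

/-- The `k`-th eigenvalue `λ_k(G)` of the Friedrichs extension. -/
noncomputable def friedrichsEigen (G : MetricGraphOn X) (k : ℕ) : ℝ :=
  G.eigenOn Set.univ {f | G.H100Mem f} k

end MetricGraphOn

/-!
If the embedding is compact, take an `L²`-Cauchy subsequence of functions whose tails stay
large along an exhaustion of `G` by finite subgraphs: one fixed member has a small tail, and
the later members are `L²`-close to it, so their tails are small too.

Conversely, by Cauchy–Schwarz a function of energy at most `1` is `½`-Hölder on every edge, so
on a finite subgraph the `L²` distance of two such functions is controlled by their values on a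
fine finite grid. These values are bounded, so a diagonal subsequence converges on the countable
set of all grid points of all edges, and the uniformly small tails take care of the rest of `G`.
-/

open Topology

theorem sq_integral_le_measureReal_mul_integral_sq {α : Type*} [MeasurableSpace α]
    {μ : Measure α} [IsFiniteMeasure μ] {g : α → ℝ} (hg : MemLp g 2 μ) :
    (∫ x, g x ∂μ) ^ 2 ≤ μ.real univ * ∫ x, g x ^ 2 ∂μ := by
  set M := μ.real univ
  set I := ∫ x, g x ∂μ
  set Q := ∫ x, g x ^ 2 ∂μ
  have hg1 : Integrable (fun x => 2 * M * I * g x) μ := (hg.integrable one_le_two).const_mul _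
  have hg2 : Integrable (fun x => M ^ 2 * g x ^ 2) μ := hg.integrable_sq.const_mul _
  have hg12 : Integrable (fun x => M ^ 2 * g x ^ 2 - 2 * M * I * g x) μ := hg2.sub hg1
  have hexpand : ∫ x, (M * g x - I) ^ 2 ∂μ = M * (M * Q - I ^ 2) := by
    calc ∫ x, (M * g x - I) ^ 2 ∂μ = ∫ x, (M ^ 2 * g x ^ 2 - 2 * M * I * g x) + I ^ 2 ∂μ := by
          congr 1; funext x; ring
      _ = M * (M * Q - I ^ 2) := by
          rw [integral_add hg12 (integrable_const _), integral_sub hg2 hg1,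
            integral_const_mul, integral_const_mul, integral_const, smul_eq_mul]
          ring
  have hnonneg : 0 ≤ M * (M * Q - I ^ 2) := hexpand ▸ integral_nonneg fun _ => sq_nonneg _
  rcases measureReal_nonneg.eq_or_lt with hM | hM
  · have hμ : μ = 0 := by
      rwa [eq_comm, measureReal_eq_zero_iff (measure_ne_top μ univ),
        Measure.measure_univ_eq_zero] at hM
    simp [I, M, hμ]
  · nlinarith

theorem exists_fin_abs_sub_mul_div_le {L t : ℝ} {N : ℕ} (hN : 0 < N) (ht : t ∈ Ico 0 L) :
    ∃ i : Fin N, |t - i * L / N| ≤ L / N := by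
  obtain ⟨ht0, htL⟩ := ht
  have hL : 0 < L := ht0.trans_lt htL
  have hN' : (0 : ℝ) < N := Nat.cast_pos.mpr hN
  have htN : 0 ≤ t * N / L := by positivity
  set i := ⌊t * N / L⌋₊
  have hlow : (i : ℝ) * L / N ≤ t := by
    rw [div_le_iff₀ hN', ← le_div_iff₀ hL]; exact Nat.floor_le htN
  have hup : t ≤ (i : ℝ) * L / N + L / N := by
    rw [← add_div, le_div_iff₀ hN']
    nlinarith [(div_lt_iff₀ hL).mp (Nat.lt_floor_add_one (t * N / L))]
  have hiN : i < N := by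
    rw [Nat.floor_lt htN, div_lt_iff₀ hL]
    nlinarith
  exact ⟨⟨i, hiN⟩, abs_le.mpr ⟨by simp only; linarith, by simp only; linarith⟩⟩

theorem fin_mul_div_mem_Icc {L : ℝ} (hL : 0 ≤ L) {N : ℕ} (i : Fin N) :
    (i * L / N : ℝ) ∈ Icc 0 L := by
  have hN : (0 : ℝ) < N := by exact_mod_cast i.pos
  refine ⟨by positivity, (div_le_iff₀ hN).mpr ?_⟩
  have : (i : ℝ) + 1 ≤ N := by exact_mod_cast i.isLt
  nlinarith

theorem exists_strictMono_forall_tendsto_of_abs_le {ι : Type*} [Countable ι]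
    {v : ℕ → ι → ℝ} {C : ι → ℝ} (hv : ∀ n j, |v n j| ≤ C j) :
    ∃ a : ι → ℝ, ∃ φ : ℕ → ℕ, StrictMono φ ∧ ∀ j, Tendsto (fun n => v (φ n) j) atTop (𝓝 (a j)) := by
  have hmem : ∀ n, v n ∈ univ.pi fun j => Icc (-C j) (C j) := fun n j _ => abs_le.mp (hv n j)
  obtain ⟨a, -, φ, hφ, hlim⟩ := (isCompact_univ_pi fun j => isCompact_Icc).isSeqCompact hmem
  exact ⟨a, φ, hφ, tendsto_pi_nhds.mp hlim⟩

namespace MetricGraphOn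

variable {X : Type} [MetricSpace X]

section

variable (G : MetricGraphOn X) {f g : X → ℝ} {e : G.E}

theorem edgeMass_nonneg (f : X → ℝ) (e : G.E) : 0 ≤ G.edgeMass f e :=
  integral_nonneg fun _ => sq_nonneg _

theorem edgeEnergy_nonneg (f : X → ℝ) (e : G.E) : 0 ≤ G.edgeEnergy f e :=
  integral_nonneg fun _ => sq_nonneg _

theorem l2normSqOn_nonneg (A : Set G.E) (f : X → ℝ) : 0 ≤ G.l2normSqOn A f :=
  tsum_nonneg fun _ => G.edgeMass_nonneg f _

theorem l2normSq_le_h1normSq (f : X → ℝ) : G.l2normSq f ≤ G.h1normSq f :=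
  le_add_of_nonneg_right (tsum_nonneg fun _ => G.edgeEnergy_nonneg f _)

theorem integrableOn_sq_comp_edgeMap (hf : Continuous f) (e : G.E) :
    IntegrableOn (fun t => f (G.edgeMap e t) ^ 2) (Ioo 0 (G.len e)) :=
  ((hf.comp_continuousOn (G.edgeMap_cont e)).pow 2).integrableOn_compact isCompact_Icc
    |>.mono_set Ioo_subset_Icc_self

theorem edgeMass_le_len_mul {C : ℝ} (h : ∀ t ∈ Ioo 0 (G.len e), f (G.edgeMap e t) ^ 2 ≤ C) :
    G.edgeMass f e ≤ G.len e * C := by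
  have hbound := norm_setIntegral_le_of_norm_le_const (μ := volume) measure_Ioo_lt_top
    fun t ht => (Real.norm_of_nonneg (sq_nonneg (f (G.edgeMap e t)))).trans_le (h t ht)
  rw [Real.volume_real_Ioo_of_le (G.len_pos e).le, sub_zero, mul_comm] at hbound
  exact (le_abs_self _).trans hbound

theorem len_mul_le_edgeMass (hf : Continuous f) {C : ℝ}
    (h : ∀ t ∈ Ioo 0 (G.len e), C ≤ f (G.edgeMap e t) ^ 2) :
    G.len e * C ≤ G.edgeMass f e := by
  have hbound := setIntegral_ge_of_const_le measurableSet_Ioo measure_Ioo_lt_top.ne h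
    (G.integrableOn_sq_comp_edgeMap hf e)
  rwa [Real.volume_real_Ioo_of_le (G.len_pos e).le, sub_zero, smul_eq_mul] at hbound

theorem edgeMass_add_le (hf : Continuous f) (hg : Continuous g) (e : G.E) :
    G.edgeMass (f + g) e ≤ 2 * G.edgeMass f e + 2 * G.edgeMass g e := by
  have hf2 := (G.integrableOn_sq_comp_edgeMap hf e).const_mul 2
  have hg2 := (G.integrableOn_sq_comp_edgeMap hg e).const_mul 2
  rw [edgeMass, edgeMass, edgeMass, ← integral_const_mul, ← integral_const_mul,
    ← integral_add hf2 hg2]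
  refine setIntegral_mono_on (G.integrableOn_sq_comp_edgeMap (hf.add hg) e) (hf2.add hg2)
    measurableSet_Ioo fun t _ => ?_
  simp only [Pi.add_apply]
  nlinarith [sq_nonneg (f (G.edgeMap e t) - g (G.edgeMap e t))]

theorem edgeMass_neg (f : X → ℝ) : G.edgeMass (-f) = G.edgeMass f :=
  funext fun e => by simp [edgeMass]

theorem summable_edgeMass_add (hf : Continuous f) (hg : Continuous g)
    (hsf : Summable (G.edgeMass f)) (hsg : Summable (G.edgeMass g)) :
    Summable (G.edgeMass (f + g)) :=
  .of_nonneg_of_le (G.edgeMass_nonneg _) (G.edgeMass_add_le hf hg)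
    ((hsf.mul_left 2).add (hsg.mul_left 2))

theorem summable_edgeMass_sub (hf : Continuous f) (hg : Continuous g)
    (hsf : Summable (G.edgeMass f)) (hsg : Summable (G.edgeMass g)) :
    Summable (G.edgeMass (f - g)) := by
  rw [sub_eq_add_neg]
  exact G.summable_edgeMass_add hf hg.neg hsf (G.edgeMass_neg g ▸ hsg)

theorem l2normSqOn_add_le (hf : Continuous f) (hg : Continuous g)
    (hsf : Summable (G.edgeMass f)) (hsg : Summable (G.edgeMass g)) (A : Set G.E) :
    G.l2normSqOn A (f + g) ≤ 2 * G.l2normSqOn A f + 2 * G.l2normSqOn A g := by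
  have hsf2 : Summable fun e : A => 2 * G.edgeMass f e := (hsf.subtype A).mul_left 2
  have hsg2 : Summable fun e : A => 2 * G.edgeMass g e := (hsg.subtype A).mul_left 2
  calc G.l2normSqOn A (f + g) ≤ ∑' e : A, (2 * G.edgeMass f e + 2 * G.edgeMass g e) :=
        ((G.summable_edgeMass_add hf hg hsf hsg).subtype A).tsum_le_tsum
          (fun e => G.edgeMass_add_le hf hg e) (hsf2.add hsg2)
    _ = 2 * G.l2normSqOn A f + 2 * G.l2normSqOn A g := by
        rw [hsf2.tsum_add hsg2, tsum_mul_left, tsum_mul_left, l2normSqOn, l2normSqOn]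

theorem l2normSqOn_sub_le (hf : Continuous f) (hg : Continuous g)
    (hsf : Summable (G.edgeMass f)) (hsg : Summable (G.edgeMass g)) (A : Set G.E) :
    G.l2normSqOn A (f - g) ≤ 2 * G.l2normSqOn A f + 2 * G.l2normSqOn A g := by
  rw [sub_eq_add_neg]
  convert G.l2normSqOn_add_le hf hg.neg hsf (G.edgeMass_neg g ▸ hsg) A using 3
  simp only [l2normSqOn, edgeMass_neg]

theorem l2normSqOn_le_l2normSq (hs : Summable (G.edgeMass f)) (A : Set G.E) :
    G.l2normSqOn A f ≤ G.l2normSq f :=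
  (hs.tsum_subtype_le _ A (G.edgeMass_nonneg f)).trans_eq (tsum_univ _).symm

theorem l2normSq_eq_sum_add_l2normSqOn_compl (hs : Summable (G.edgeMass f)) (s : Finset G.E) :
    G.l2normSq f = ∑ e ∈ s, G.edgeMass f e + G.l2normSqOn {e | e ∉ s} f :=
  (tsum_univ _).trans (hs.sum_add_tsum_subtype_compl s).symm

end

variable {G : MetricGraphOn X} {f g : X → ℝ} {K : Set (X → ℝ)}

namespace MemH1

theorem summable_edgeMass_add_edgeEnergy (hf : G.MemH1 f) :
    Summable fun e => G.edgeMass f e + G.edgeEnergy f e :=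
  (Equiv.Set.univ G.E).summable_iff.mp hf.2.2.2.2

theorem summable_edgeMass (hf : G.MemH1 f) : Summable (G.edgeMass f) :=
  .of_nonneg_of_le (G.edgeMass_nonneg f)
    (fun e => le_add_of_nonneg_right (G.edgeEnergy_nonneg f e))
    hf.summable_edgeMass_add_edgeEnergy

theorem summable_edgeEnergy (hf : G.MemH1 f) : Summable (G.edgeEnergy f) :=
  .of_nonneg_of_le (G.edgeEnergy_nonneg f)
    (fun e => le_add_of_nonneg_left (G.edgeMass_nonneg f e))
    hf.summable_edgeMass_add_edgeEnergy

theorem edgeMass_le_h1normSq (hf : G.MemH1 f) (e : G.E) :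
    G.edgeMass f e ≤ G.h1normSq f :=
  calc G.edgeMass f e ≤ G.l2normSq f :=
        (hf.summable_edgeMass.le_tsum e fun e' _ => G.edgeMass_nonneg f e').trans_eq
          (tsum_univ _).symm
    _ ≤ G.h1normSq f := G.l2normSq_le_h1normSq f

theorem edgeEnergy_le_h1normSq (hf : G.MemH1 f) (e : G.E) :
    G.edgeEnergy f e ≤ G.h1normSq f :=
  calc G.edgeEnergy f e ≤ G.derivNormSq f :=
        (hf.summable_edgeEnergy.le_tsum e fun e' _ => G.edgeEnergy_nonneg f e').trans_eq
          (tsum_univ _).symm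
    _ ≤ G.h1normSq f := le_add_of_nonneg_left (G.l2normSqOn_nonneg _ f)

theorem memLp_edgeDeriv (hf : G.MemH1 f) (e : G.E) :
    MemLp (G.edgeDeriv f e) 2 (volume.restrict (Ioc 0 (G.len e))) :=
  (memLp_two_iff_integrable_sq (measurable_deriv _).aestronglyMeasurable).mpr
    ((integrableOn_Ioc_iff_integrableOn_Ioo).mpr (hf.2.2.1 e (mem_univ e)))

theorem sub_eq_integral_edgeDeriv (hf : G.MemH1 f) (e : G.E) {s t : ℝ} (hs : 0 ≤ s)
    (hst : s ≤ t) (ht : t ≤ G.len e) :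
    f (G.edgeMap e t) - f (G.edgeMap e s) = ∫ r in Ioc s t, G.edgeDeriv f e r := by
  have hint : IntegrableOn (G.edgeDeriv f e) (Ioc 0 (G.len e)) :=
    (hf.memLp_edgeDeriv e).integrable one_le_two
  have hii : ∀ a b, 0 ≤ a → a ≤ b → b ≤ G.len e →
      IntervalIntegrable (G.edgeDeriv f e) volume a b := fun a b ha hab hb =>
    (intervalIntegrable_iff_integrableOn_Ioc_of_le hab).mpr
      (hint.mono_set (Ioc_subset_Ioc ha hb))
  have hftc : ∀ r ∈ Icc 0 (G.len e),
      f (G.edgeMap e r) = f (G.edgeMap e 0) + ∫ x in (0 : ℝ)..r, G.edgeDeriv f e x :=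
    fun r hr => by
      rw [intervalIntegral.integral_of_le hr.1, integral_Ioc_eq_integral_Ioo]
      exact hf.2.2.2.1 e (mem_univ e) r hr
  rw [hftc t ⟨hs.trans hst, ht⟩, hftc s ⟨hs, hst.trans ht⟩, ← intervalIntegral.integral_of_le hst,
    ← intervalIntegral.integral_add_adjacent_intervals (hii 0 s le_rfl hs (hst.trans ht))
      (hii s t hs hst ht)]
  ring

theorem sq_sub_le (hf : G.MemH1 f) (e : G.E) {s t : ℝ} (hs : s ∈ Icc 0 (G.len e))
    (ht : t ∈ Icc 0 (G.len e)) :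
    (f (G.edgeMap e t) - f (G.edgeMap e s)) ^ 2 ≤ |t - s| * G.edgeEnergy f e := by
  wlog hst : s ≤ t generalizing s t
  · rw [← neg_sub, neg_sq, abs_sub_comm]
    exact this ht hs (le_of_not_ge hst)
  have hsub : Ioc s t ⊆ Ioc 0 (G.len e) := Ioc_subset_Ioc hs.1 ht.2
  have hcs := sq_integral_le_measureReal_mul_integral_sq
    ((hf.memLp_edgeDeriv e).mono_measure (Measure.restrict_mono hsub le_rfl))
  rw [measureReal_restrict_apply_univ, Real.volume_real_Ioc_of_le hst] at hcs
  rw [hf.sub_eq_integral_edgeDeriv e hs.1 hst ht.2, abs_of_nonneg (sub_nonneg.mpr hst)]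
  refine hcs.trans (mul_le_mul_of_nonneg_left ?_ (sub_nonneg.mpr hst))
  rw [edgeEnergy, ← integral_Ioc_eq_integral_Ioo]
  exact setIntegral_mono_set
    ((integrableOn_Ioc_iff_integrableOn_Ioo).mpr (hf.2.2.1 e (mem_univ e)))
    (Eventually.of_forall fun _ => sq_nonneg _) hsub.eventuallyLE

theorem sq_apply_edgeMap_le (hf : G.MemH1 f) (e : G.E) {s : ℝ} (hs : s ∈ Icc 0 (G.len e)) :
    f (G.edgeMap e s) ^ 2 ≤ 2 * G.edgeMass f e / G.len e + 2 * G.len e * G.edgeEnergy f e := by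
  have hL := G.len_pos e
  obtain ⟨t₀, ht₀, hmin⟩ := isCompact_Icc.exists_isMinOn (nonempty_Icc.mpr hL.le)
    ((hf.1.comp_continuousOn (G.edgeMap_cont e)).pow 2)
  have hmass : f (G.edgeMap e t₀) ^ 2 ≤ G.edgeMass f e / G.len e := by
    rw [le_div_iff₀ hL, mul_comm]
    exact G.len_mul_le_edgeMass hf.1 fun t ht => hmin (Ioo_subset_Icc_self ht)
  have hdist : |s - t₀| ≤ G.len e := abs_le.mpr ⟨by linarith [hs.1, ht₀.2], by linarith [hs.2, ht₀.1]⟩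
  have hdiff : (f (G.edgeMap e s) - f (G.edgeMap e t₀)) ^ 2 ≤ G.len e * G.edgeEnergy f e :=
    (hf.sq_sub_le e ht₀ hs).trans (mul_le_mul_of_nonneg_right hdist (G.edgeEnergy_nonneg f e))
  rw [mul_div_assoc]
  nlinarith [sq_nonneg (f (G.edgeMap e s) - 2 * f (G.edgeMap e t₀))]

theorem edgeMass_sub_le (hf : G.MemH1 f) (hg : G.MemH1 g) (e : G.E) {N : ℕ} (hN : 0 < N) :
    G.edgeMass (f - g) e ≤
      3 * G.len e * ∑ i : Fin N,
          (f (G.edgeMap e (i * G.len e / N)) - g (G.edgeMap e (i * G.len e / N))) ^ 2 +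
        3 * G.len e ^ 2 / N * (G.edgeEnergy f e + G.edgeEnergy g e) := by
  set L := G.len e
  set S := ∑ i : Fin N, (f (G.edgeMap e (i * L / N)) - g (G.edgeMap e (i * L / N))) ^ 2
  have hL : 0 < L := G.len_pos e
  suffices h : ∀ t ∈ Ioo 0 L, (f - g) (G.edgeMap e t) ^ 2 ≤
      3 * S + 3 * (L / N) * (G.edgeEnergy f e + G.edgeEnergy g e) by
    refine (G.edgeMass_le_len_mul h).trans_eq ?_
    ring
  intro t ht
  obtain ⟨i, hi⟩ := exists_fin_abs_sub_mul_div_le hN (Ioo_subset_Ico_self ht)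
  have hti := fin_mul_div_mem_Icc hL.le i
  have hholder : ∀ {h : X → ℝ}, G.MemH1 h →
      (h (G.edgeMap e t) - h (G.edgeMap e (i * L / N))) ^ 2 ≤ L / N * G.edgeEnergy h e :=
    fun hh => (hh.sq_sub_le e hti (Ioo_subset_Icc_self ht)).trans
      (mul_le_mul_of_nonneg_right hi (G.edgeEnergy_nonneg _ e))
  have hgrid : (f (G.edgeMap e (i * L / N)) - g (G.edgeMap e (i * L / N))) ^ 2 ≤ S :=
    Finset.single_le_sum (f := fun j : Fin N =>
      (f (G.edgeMap e (j * L / N)) - g (G.edgeMap e (j * L / N))) ^ 2)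
      (fun _ _ => sq_nonneg _) (Finset.mem_univ i)
  have hf' := hholder hf
  have hg' := hholder hg
  simp only [Pi.sub_apply]
  nlinarith [sq_nonneg (f (G.edgeMap e t) - f (G.edgeMap e (i * L / N))
      + (g (G.edgeMap e t) - g (G.edgeMap e (i * L / N)))),
    sq_nonneg (f (G.edgeMap e (i * L / N)) - g (G.edgeMap e (i * L / N))
      - (f (G.edgeMap e t) - f (G.edgeMap e (i * L / N)))),
    sq_nonneg (f (G.edgeMap e (i * L / N)) - g (G.edgeMap e (i * L / N))
      + (g (G.edgeMap e t) - g (G.edgeMap e (i * L / N))))]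

end MemH1

theorem tendsto_edgeMass_sub_of_cauchySeq {u : ℕ → X → ℝ} (hu : ∀ n, G.MemH1 (u n)) {e : G.E}
    {C : ℝ} (hE : ∀ n, G.edgeEnergy (u n) e ≤ C)
    (hgrid : ∀ (N : ℕ) (i : Fin N), CauchySeq fun n => u n (G.edgeMap e (i * G.len e / N))) :
    Tendsto (fun p : ℕ × ℕ => G.edgeMass (u p.1 - u p.2) e) atTop (𝓝 0) := by
  set L := G.len e
  refine tendsto_order.mpr ⟨fun a ha => Eventually.of_forall fun p =>
    ha.trans_le (G.edgeMass_nonneg _ e), fun δ hδ => ?_⟩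
  obtain ⟨N, hNδ, hN⟩ := (((tendsto_const_div_atTop_nhds_zero_nat (6 * L ^ 2 * C)).eventually
    (gt_mem_nhds hδ)).and (eventually_gt_atTop 0)).exists
  have hsum : Tendsto (fun p : ℕ × ℕ => 3 * L * ∑ i : Fin N,
      (u p.1 (G.edgeMap e (i * L / N)) - u p.2 (G.edgeMap e (i * L / N))) ^ 2 +
        6 * L ^ 2 * C / N) atTop (𝓝 (6 * L ^ 2 * C / N)) := by
    have hdist : ∀ i : Fin N, Tendsto (fun p : ℕ × ℕ =>
        (u p.1 (G.edgeMap e (i * L / N)) - u p.2 (G.edgeMap e (i * L / N))) ^ 2) atTop (𝓝 0) :=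
      fun i => by
        simpa [Real.dist_eq, sq_abs] using
          (cauchySeq_iff_tendsto_dist_atTop_0.mp (hgrid N i)).pow 2
    simpa using ((tendsto_finsetSum _ fun i _ => hdist i).const_mul (3 * L)).add_const
      (6 * L ^ 2 * C / N)
  filter_upwards [hsum.eventually (gt_mem_nhds hNδ)] with p hp
  refine ((hu p.1).edgeMass_sub_le (hu p.2) e hN).trans_lt (lt_of_le_of_lt ?_ hp)
  gcongr
  calc 3 * L ^ 2 / N * (G.edgeEnergy (u p.1) e + G.edgeEnergy (u p.2) e)
      ≤ 3 * L ^ 2 / N * (C + C) := by gcongr <;> exact hE _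
    _ = 6 * L ^ 2 * C / N := by ring

def HasUniformlySmallTails (G : MetricGraphOn X) (K : Set (X → ℝ)) : Prop :=
  ∀ ε > 0, ∃ s : Finset G.E, ∀ f ∈ K, G.h1normSq f ≤ 1 → G.l2normSqOn {e | e ∉ s} f ≤ ε

theorem hasUniformlySmallTails_iff :
    G.HasUniformlySmallTails K ↔ ∀ ε : ℝ, 0 < ε → ∃ A : Set G.E, A.Finite ∧
      ∀ f ∈ K, √(G.h1normSq f) ≤ 1 → √(G.l2normSqOn {e | e ∉ A} f) ≤ ε := by
  constructor
  · intro h ε hε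
    obtain ⟨s, hs⟩ := h (ε ^ 2) (by positivity)
    exact ⟨s, s.finite_toSet, fun f hf h1 =>
      (Real.sqrt_le_left hε.le).mpr (hs f hf (Real.sqrt_le_one.mp h1))⟩
  · intro h ε hε
    obtain ⟨A, hA, hsmall⟩ := h √ε (Real.sqrt_pos.mpr hε)
    refine ⟨hA.toFinset, fun f hf h1 => ?_⟩
    simpa [Real.sq_sqrt hε.le] using
      (Real.sqrt_le_left (Real.sqrt_nonneg ε)).mp (hsmall f hf (Real.sqrt_le_one.mpr h1))

theorem CompactlyEmbedded.hasUniformlySmallTails (hK : K ⊆ {f | G.MemH1 f})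
    (hc : G.CompactlyEmbedded K) : G.HasUniformlySmallTails K := by
  have := G.countableE
  obtain ⟨s, hs⟩ := exists_seq_tendsto (atTop : Filter (Finset G.E))
  intro ε hε
  by_contra! hlarge
  choose u huK hu1 hutail using fun k => hlarge (s k)
  obtain ⟨φ, hφ, hcauchy⟩ := hc u huK hu1
  obtain ⟨N, hN⟩ := hcauchy (ε / 8) (by positivity)
  have hg : G.MemH1 (u (φ N)) := hK (huK (φ N))
  have hgtail : Tendsto (fun m => G.l2normSqOn {e | e ∉ s (φ m)} (u (φ N))) atTop (𝓝 0) :=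
    (tendsto_tsum_compl_atTop_zero (G.edgeMass (u (φ N)))).comp (hs.comp hφ.tendsto_atTop)
  obtain ⟨m, hmN, hm⟩ := ((eventually_ge_atTop N).and
    (hgtail.eventually (gt_mem_nhds (by positivity : (0 : ℝ) < ε / 8)))).exists
  have hf : G.MemH1 (u (φ m)) := hK (huK (φ m))
  have hdiff := G.summable_edgeMass_sub hf.1 hg.1 hf.summable_edgeMass hg.summable_edgeMass
  have hsplit := G.l2normSqOn_add_le (hf.1.sub hg.1) hg.1 hdiff hg.summable_edgeMass
    {e | e ∉ s (φ m)}
  rw [sub_add_cancel] at hsplit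
  have hclose := (G.l2normSqOn_le_l2normSq hdiff {e | e ∉ s (φ m)}).trans (hN m hmN N le_rfl)
  linarith [hutail (φ m)]

theorem HasUniformlySmallTails.compactlyEmbedded (hK : K ⊆ {f | G.MemH1 f})
    (ht : G.HasUniformlySmallTails K) : G.CompactlyEmbedded K := by
  intro u huK hu1
  have hu (n : ℕ) : G.MemH1 (u n) := hK (huK n)
  have hbound (n : ℕ) (j : G.E × Σ N : ℕ, Fin N) :
      |u n (G.edgeMap j.1 (j.2.2 * G.len j.1 / j.2.1))| ≤ √(2 / G.len j.1 + 2 * G.len j.1) := by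
    refine Real.abs_le_sqrt (((hu n).sq_apply_edgeMap_le j.1
      (fin_mul_div_mem_Icc (G.len_pos j.1).le j.2.2)).trans ?_)
    have hL := G.len_pos j.1
    have hmass := ((hu n).edgeMass_le_h1normSq j.1).trans (hu1 n)
    have henergy := ((hu n).edgeEnergy_le_h1normSq j.1).trans (hu1 n)
    calc 2 * G.edgeMass (u n) j.1 / G.len j.1 + 2 * G.len j.1 * G.edgeEnergy (u n) j.1
        ≤ 2 * 1 / G.len j.1 + 2 * G.len j.1 * 1 := by gcongr
      _ = 2 / G.len j.1 + 2 * G.len j.1 := by ring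
  have := G.countableE
  obtain ⟨_, φ, hφ, hlim⟩ := exists_strictMono_forall_tendsto_of_abs_le hbound
  refine ⟨φ, hφ, fun ε hε => ?_⟩
  obtain ⟨s, hs⟩ := ht (ε / 8) (by positivity)
  have hedges : Tendsto (fun p : ℕ × ℕ => ∑ e ∈ s, G.edgeMass (u (φ p.1) - u (φ p.2)) e)
      atTop (𝓝 0) := by
    simpa using tendsto_finsetSum s fun e _ =>
      tendsto_edgeMass_sub_of_cauchySeq (fun n => hu (φ n))
        (fun n => ((hu (φ n)).edgeEnergy_le_h1normSq e).trans (hu1 (φ n)))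
        fun N i => (hlim (e, ⟨N, i⟩)).cauchySeq
  obtain ⟨p₀, hp₀⟩ := eventually_atTop.mp
    (hedges.eventually (ge_mem_nhds (by positivity : (0 : ℝ) < ε / 2)))
  refine ⟨max p₀.1 p₀.2, fun m hm n hn => ?_⟩
  have hfm := hu (φ m)
  have hfn := hu (φ n)
  rw [G.l2normSq_eq_sum_add_l2normSqOn_compl
    (G.summable_edgeMass_sub hfm.1 hfn.1 hfm.summable_edgeMass hfn.summable_edgeMass) s]
  have htail := G.l2normSqOn_sub_le hfm.1 hfn.1 hfm.summable_edgeMass hfn.summable_edgeMass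
    {e | e ∉ s}
  have hsum := hp₀ (m, n) ⟨(le_max_left _ _).trans hm, (le_max_right _ _).trans hn⟩
  linarith [hs _ (huK (φ m)) (hu1 (φ m)), hs _ (huK (φ n)) (hu1 (φ n))]

end MetricGraphOn

open MetricGraphOn in
theorem statement0_general (X : Type) [MetricSpace X] (G : MetricGraphOn X)
    (K : Set (X → ℝ)) (hK1 : K ⊆ {f | G.MemH1 f}) :
    G.CompactlyEmbedded K ↔
      ∀ ε : ℝ, 0 < ε → ∃ A : Set G.E, A.Finite ∧
        ∀ f ∈ K, Real.sqrt (G.h1normSq f) ≤ 1 →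
          Real.sqrt (G.l2normSqOn {e | e ∉ A} f) ≤ ε := by
  rw [← hasUniformlySmallTails_iff]
  exact ⟨fun h => h.hasUniformlySmallTails hK1, fun h => h.compactlyEmbedded hK1⟩

open MetricGraphOn in
/-- Kolmogorov–Riesz-type criterion. Let `G` be a locally finite,
connected metric graph and `K` a closed subspace of `H¹(G)`. Then the embedding of
`K` into `L²(G)` is compact if and only if for every `ε > 0` there is a compact
(finite) subgraph `G_c` of `G` (given by a finite edge set `A`) such that
`‖f‖_{L²(G \ G_c)} ≤ ε` for every `f ∈ K` with `‖f‖_{H¹(G)} ≤ 1`. -/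
theorem statement0 (X : Type) [MetricSpace X] (G : MetricGraphOn X)
    (hlf : G.LocallyFinite) (hconn : ConnectedSpace X)
    (K : Set (X → ℝ)) (hK1 : K ⊆ {f | G.MemH1 f})
    (hKsub : ∃ p : Submodule ℝ (X → ℝ), K = ↑p)
    (hKclosed : ∀ (u : ℕ → X → ℝ) (f : X → ℝ), (∀ n, u n ∈ K) → G.MemH1 f →
      Tendsto (fun n => G.h1normSq (f - u n)) atTop (nhds 0) → f ∈ K) :
    G.CompactlyEmbedded K ↔
      ∀ ε : ℝ, 0 < ε → ∃ A : Set G.E, A.Finite ∧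
        ∀ f ∈ K, Real.sqrt (G.h1normSq f) ≤ 1 →
          Real.sqrt (G.l2normSqOn {e | e ∉ A} f) ≤ ε :=
  statement0_general X G K hK1
end

section
/- Let G be a metric graph on a countable edge set, let f be a continuous function on G that is C^1 on each closed edge, and let φ ∈ L^1_loc(G) be nonnegative. Then ∫_G φ(x)|f'(x)| dx = ∫_ℝ Σ_{x ∈ S_t} φ(x) dt, where S_t = {x ∈ G : f(x) = t} denotes the level set of f at level t. -/
open MeasureTheory Set Filter
open scoped ENNReal

/-! On each edge the formula is the one-dimensional area formula for the `C¹` function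
`f ∘ edgeMap e`. Near noncritical points the inverse function theorem cuts the domain into
countably many pieces on which the map is injective; there a fibre has at most one point and the
formula is the change of variables formula. Critical points contribute nothing to the left side
and, by Sard's lemma, only a null set of values to the right. Summing over the edges, almost
every level avoids the countably many values taken at vertices, and such a level set is the
disjoint union of its traces on the open edges. -/

section FiberSum

open Function

variable {α β ι : Type*}

noncomputable def fiberSum (s : Set α) (f : α → β) (ψ : α → ℝ≥0∞) (y : β) : ℝ≥0∞ :=
  ∑' x : ↥(s ∩ f ⁻¹' {y}), ψ x

variable {s t : Set α} {f : α → β} {ψ ψ' : α → ℝ≥0∞} {y : β}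

theorem fiberSum_eq_zero_of_notMem_image (hy : y ∉ f '' s) : fiberSum s f ψ y = 0 := by
  have : s ∩ f ⁻¹' {y} = ∅ := eq_empty_of_forall_notMem fun x hx => hy ⟨x, hx.1, hx.2⟩
  rw [fiberSum, this, tsum_empty]

theorem Set.InjOn.fiberSum_apply (hf : InjOn f s) {x : α} (hx : x ∈ s) :
    fiberSum s f ψ (f x) = ψ x := by
  have : s ∩ f ⁻¹' {f x} = {x} :=
    subset_antisymm (fun x' hx' => hf hx'.1 hx hx'.2) (by simp [hx])
  rw [fiberSum, this, tsum_singleton]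

theorem Set.InjOn.fiberSum_eq_extend (hf : InjOn f s) :
    fiberSum s f ψ = Function.extend (s.domRestrict f) (fun x => ψ x) 0 := by
  funext y
  by_cases hy : y ∈ f '' s
  · obtain ⟨x, hx, rfl⟩ := hy
    rw [hf.fiberSum_apply hx]
    exact ((injOn_iff_injective.mp hf).extend_apply (fun x : s => ψ x) 0 ⟨x, hx⟩).symm
  · rw [fiberSum_eq_zero_of_notMem_image hy, Function.extend_apply']
    · rfl
    · rintro ⟨⟨x, hx⟩, rfl⟩
      exact hy ⟨x, hx, rfl⟩

theorem fiberSum_iUnion {s : ι → Set α} (hs : Pairwise (Disjoint on s)) :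
    fiberSum (⋃ i, s i) f ψ y = ∑' i, fiberSum (s i) f ψ y := by
  have hd : Pairwise (Disjoint on fun i => s i ∩ f ⁻¹' {y}) := fun i j hij =>
    (hs hij).mono inter_subset_left inter_subset_left
  rw [fiberSum, iUnion_inter, ← (unionEqSigmaOfDisjoint hd).symm.tsum_eq, ENNReal.tsum_sigma']
  rfl

theorem fiberSum_congr_set (hts : t ⊆ s) (hy : y ∉ f '' (s \ t)) :
    fiberSum s f ψ y = fiberSum t f ψ y := by
  have : s ∩ f ⁻¹' {y} = t ∩ f ⁻¹' {y} :=
    subset_antisymm (fun x hx => ⟨by_contra fun hxt => hy ⟨x, ⟨hx.1, hxt⟩, hx.2⟩, hx.2⟩)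
      (inter_subset_inter_left _ hts)
  rw [fiberSum, fiberSum, this]

theorem fiberSum_congr_fun (hy : y ∉ f '' {x ∈ s | ψ x ≠ ψ' x}) :
    fiberSum s f ψ y = fiberSum s f ψ' y :=
  tsum_congr fun x => by_contra fun hne => hy ⟨x, ⟨x.2.1, hne⟩, x.2.2⟩

end FiberSum

section AreaFormula

open Function

variable {E : Type*} [NormedAddCommGroup E] [NormedSpace ℝ E] [FiniteDimensional ℝ E]
  {s U : Set E} {f : E → E}

theorem ContDiffAt.exists_isOpen_mem_injOn {x : E} (hf : ContDiffAt ℝ 1 f x)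
    (hdet : (fderiv ℝ f x).det ≠ 0) : ∃ V, IsOpen V ∧ x ∈ V ∧ InjOn f V := by
  have hf' : HasFDerivAt f
      ((fderiv ℝ f x).toContinuousLinearEquivOfDetNeZero hdet : E →L[ℝ] E) x := by
    simpa using (hf.differentiableAt one_ne_zero).hasFDerivAt
  let e := hf.toOpenPartialHomeomorph f hf' one_ne_zero
  exact ⟨e.source, e.open_source, hf.mem_toOpenPartialHomeomorph_source hf' _, e.injOn⟩

variable [MeasurableSpace E] [BorelSpace E] (μ : Measure E) [μ.IsAddHaarMeasure]
  {f' : E → E →L[ℝ] E} {ψ : E → ℝ≥0∞}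

theorem measurable_fiberSum_of_injOn (hs : MeasurableSet s)
    (hf' : ∀ x ∈ s, HasFDerivWithinAt f (f' x) s x) (hf : InjOn f s) (hψ : Measurable ψ) :
    Measurable (fiberSum s f ψ) := by
  rw [hf.fiberSum_eq_extend]
  exact (measurableEmbedding_of_fderivWithin hs hf' hf).measurable_extend
    (hψ.comp measurable_subtype_coe) measurable_const

theorem lintegral_fiberSum_of_injOn (hs : MeasurableSet s)
    (hf' : ∀ x ∈ s, HasFDerivWithinAt f (f' x) s x) (hf : InjOn f s) :
    ∫⁻ y, fiberSum s f ψ y ∂μ = ∫⁻ x in s, ENNReal.ofReal |(f' x).det| * ψ x ∂μ := by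
  have hsupp : support (fiberSum s f ψ) ⊆ f '' s := fun y hy =>
    by_contra fun hy' => hy (fiberSum_eq_zero_of_notMem_image hy')
  rw [← setLIntegral_eq_of_support_subset hsupp,
    lintegral_image_eq_lintegral_abs_det_fderiv_mul μ hs hf' hf]
  exact setLIntegral_congr_fun hs fun x hx => by rw [hf.fiberSum_apply hx]

theorem measurableSet_det_fderiv_ne_zero (f : E → E) :
    MeasurableSet {x | (fderiv ℝ f x).det ≠ 0} :=
  (measurableSet_singleton 0).compl.preimage
    (ContinuousLinearMap.continuous_det.measurable.comp (measurable_fderiv ℝ f))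

theorem ContDiffOn.exists_injOn_partition (hU : IsOpen U) (hf : ContDiffOn ℝ 1 f U) :
    ∃ K : ℕ → Set E, (∀ n, MeasurableSet (K n)) ∧ Pairwise (Disjoint on K) ∧
      (∀ n, InjOn f (K n)) ∧ ⋃ n, K n = U ∩ {x | (fderiv ℝ f x).det ≠ 0} := by
  set U₁ := U ∩ {x | (fderiv ℝ f x).det ≠ 0}
  have hU₁ : MeasurableSet U₁ := hU.measurableSet.inter (measurableSet_det_fderiv_ne_zero f)
  have hloc : ∀ x, ∃ V, IsOpen V ∧ (x ∈ U₁ → x ∈ V) ∧ InjOn f V := fun x => by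
    by_cases hx : x ∈ U₁
    · obtain ⟨V, hVo, hxV, hV⟩ :=
        (hf.contDiffAt (hU.mem_nhds hx.1)).exists_isOpen_mem_injOn hx.2
      exact ⟨V, hVo, fun _ => hxV, hV⟩
    · exact ⟨∅, isOpen_empty, fun h => absurd h hx, injOn_empty f⟩
  choose V hVo hxV hVinj using hloc
  obtain ⟨T, hT, hTV⟩ := TopologicalSpace.isOpen_iUnion_countable V hVo
  obtain ⟨u, hu⟩ := (countable_iff_exists_subset_range.mp hT)
  refine ⟨disjointed fun n => V (u n) ∩ U₁,
    MeasurableSet.disjointed fun n => (hVo _).measurableSet.inter hU₁, disjoint_disjointed _,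
    fun n => (hVinj (u n)).mono ((disjointed_subset _ n).trans inter_subset_left), ?_⟩
  rw [iUnion_disjointed]
  refine subset_antisymm (iUnion_subset fun n => inter_subset_right) fun x hx => ?_
  have : x ∈ ⋃ t ∈ T, V t := hTV ▸ mem_iUnion_of_mem x (hxV x hx)
  obtain ⟨t, ht, hxt⟩ := mem_iUnion₂.mp this
  obtain ⟨n, rfl⟩ := hu ht
  exact mem_iUnion_of_mem n ⟨hxt, hx⟩

theorem ContDiffOn.lintegral_abs_det_fderiv_mul_eq_lintegral_fiberSum_of_measurable
    (hU : IsOpen U) (hf : ContDiffOn ℝ 1 f U) (hψ : Measurable ψ) :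
    AEMeasurable (fiberSum U f ψ) μ ∧
      ∫⁻ x in U, ENNReal.ofReal |(fderiv ℝ f x).det| * ψ x ∂μ = ∫⁻ y, fiberSum U f ψ y ∂μ := by
  obtain ⟨K, hKm, hKd, hKinj, hKU⟩ := hf.exists_injOn_partition hU
  have hderiv : ∀ x ∈ U, HasFDerivWithinAt f (fderiv ℝ f x) U x := fun x hx =>
    ((hf.differentiableOn one_ne_zero x hx).differentiableAt (hU.mem_nhds hx)).hasFDerivAt
      |>.hasFDerivWithinAt
  have hKsub : ∀ n, K n ⊆ U := fun n => (subset_iUnion K n).trans (hKU ▸ inter_subset_left)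
  have hK' : ∀ n, ∀ x ∈ K n, HasFDerivWithinAt f (fderiv ℝ f x) (K n) x := fun n x hx =>
    (hderiv x (hKsub n hx)).mono (hKsub n)
  have hKmeas : ∀ n, Measurable (fiberSum (K n) f ψ) := fun n =>
    measurable_fiberSum_of_injOn (hKm n) (hK' n) (hKinj n) hψ
  have hcrit : μ (f '' (U \ ⋃ n, K n)) = 0 := by
    rw [hKU, sdiff_self_inter]
    refine addHaar_image_eq_zero_of_det_fderivWithin_eq_zero μ
      (fun x hx => (hderiv x hx.1).mono sdiff_subset) fun x hx => ?_
    simpa using hx.2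
  have hae : fiberSum U f ψ =ᵐ[μ] fun y => ∑' n, fiberSum (K n) f ψ y := by
    filter_upwards [measure_eq_zero_iff_ae_notMem.mp hcrit] with y hy
    rw [fiberSum_congr_set (iUnion_subset hKsub) hy, fiberSum_iUnion hKd]
  refine ⟨(Measurable.tsum hKmeas).aemeasurable.congr hae.symm, ?_⟩
  rw [lintegral_congr_ae hae, lintegral_tsum fun n => (hKmeas n).aemeasurable,
    ← lintegral_inter_add_sdiff _ U (measurableSet_det_fderiv_ne_zero f), ← hKU,
    lintegral_iUnion hKm hKd, setLIntegral_congr_fun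
      (hU.measurableSet.diff (measurableSet_det_fderiv_ne_zero f)) fun x hx => ?_,
    lintegral_zero, add_zero]
  · exact tsum_congr fun n => (lintegral_fiberSum_of_injOn μ (hKm n) (hK' n) (hKinj n)).symm
  · simp only [Set.mem_sdiff, mem_ofPred_eq, not_not] at hx
    simp [hx.2]

theorem DifferentiableOn.fiberSum_ae_eq {ψ' : E → ℝ≥0∞} (hf : DifferentiableOn ℝ f U)
    (hU : MeasurableSet U) (h : ψ =ᵐ[μ.restrict U] ψ') :
    fiberSum U f ψ =ᵐ[μ] fiberSum U f ψ' := by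
  set N := {x ∈ U | ψ x ≠ ψ' x}
  have hN : μ N = 0 := by
    rw [EventuallyEq, ae_restrict_iff' hU, ae_iff] at h
    exact measure_mono_null (fun x hx => Classical.not_imp.mpr hx) h
  have hfN : μ (f '' N) = 0 :=
    addHaar_image_eq_zero_of_differentiableOn_of_addHaar_eq_zero μ (hf.mono (sep_subset U _)) hN
  filter_upwards [measure_eq_zero_iff_ae_notMem.mp hfN] with y hy
  exact fiberSum_congr_fun hy

theorem ContDiffOn.lintegral_abs_det_fderiv_mul_eq_lintegral_fiberSum
    (hU : IsOpen U) (hf : ContDiffOn ℝ 1 f U) (hψ : AEMeasurable ψ (μ.restrict U)) :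
    AEMeasurable (fiberSum U f ψ) μ ∧
      ∫⁻ x in U, ENNReal.ofReal |(fderiv ℝ f x).det| * ψ x ∂μ = ∫⁻ y, fiberSum U f ψ y ∂μ := by
  have hae := (hf.differentiableOn one_ne_zero).fiberSum_ae_eq μ hU.measurableSet hψ.ae_eq_mk
  obtain ⟨hmeas, hint⟩ :=
    hf.lintegral_abs_det_fderiv_mul_eq_lintegral_fiberSum_of_measurable μ hU hψ.measurable_mk
  refine ⟨hmeas.congr hae.symm, ?_⟩
  rw [lintegral_congr_ae hae, ← hint]
  exact lintegral_congr_ae (hψ.ae_eq_mk.mono fun x hx => congrArg _ hx)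

theorem ContDiffOn.lintegral_abs_deriv_mul_eq_lintegral_fiberSum {U : Set ℝ} {g : ℝ → ℝ}
    {ψ : ℝ → ℝ≥0∞} (hU : IsOpen U) (hg : ContDiffOn ℝ 1 g U)
    (hψ : AEMeasurable ψ (volume.restrict U)) :
    AEMeasurable (fiberSum U g ψ) ∧
      ∫⁻ x in U, ENNReal.ofReal |deriv g x| * ψ x = ∫⁻ y, fiberSum U g ψ y := by
  simpa only [← toSpanSingleton_deriv, ContinuousLinearMap.det_toSpanSingleton] using
    hg.lintegral_abs_det_fderiv_mul_eq_lintegral_fiberSum volume hU hψ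

end AreaFormula

namespace MetricGraphOn

variable {X : Type} [MetricSpace X] (G : MetricGraphOn X)

theorem eq_of_edgeMap_eq {e e' : G.E} {s t : ℝ} (hs : s ∈ Ioo 0 (G.len e))
    (ht : t ∈ Ioo 0 (G.len e')) (h : G.edgeMap e s = G.edgeMap e' t) : e = e' ∧ s = t := by
  obtain rfl : e = e' := by_contra fun hne => G.interior_disjoint e e' hne s hs t ht h
  exact ⟨rfl, G.edgeMap_injOn e (Ioo_subset_Ico_self hs) (Ioo_subset_Ico_self ht) h⟩

theorem exists_edgeMap_eq_of_notMem_range_vertexMap {x : X} (hx : x ∉ range G.vertexMap) :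
    ∃ e, ∃ t ∈ Ioo 0 (G.len e), G.edgeMap e t = x := by
  obtain ⟨e, t, ht, rfl⟩ := G.cover x
  refine ⟨e, t, ⟨ht.1.lt_of_ne ?_, ht.2.lt_of_ne ?_⟩, rfl⟩
  · rintro rfl
    exact hx ⟨_, (G.edgeMap_zero e).symm⟩
  · rintro rfl
    exact hx ⟨_, (G.edgeMap_len e).symm⟩

theorem tsum_fiberSum_edgeMap {β : Type*} (f : X → β) (ψ : X → ℝ≥0∞) {y : β}
    (hy : y ∉ f '' range G.vertexMap) :
    ∑' e, fiberSum (Ioo 0 (G.len e)) (f ∘ G.edgeMap e) (ψ ∘ G.edgeMap e) y =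
      ∑' x : {x | f x = y}, ψ x := by
  let Φ : (Σ e, ↥(Ioo 0 (G.len e) ∩ (f ∘ G.edgeMap e) ⁻¹' {y})) → {x | f x = y} :=
    fun p => ⟨G.edgeMap p.1 p.2, p.2.2.2⟩
  have hΦ : Function.Bijective Φ := by
    refine ⟨fun ⟨e, s, hs⟩ ⟨e', t, ht⟩ h => ?_, fun ⟨x, hx⟩ => ?_⟩
    · obtain ⟨rfl, rfl⟩ := G.eq_of_edgeMap_eq hs.1 ht.1 (congrArg Subtype.val h)
      rfl
    · obtain ⟨e, t, ht, rfl⟩ :=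
        G.exists_edgeMap_eq_of_notMem_range_vertexMap fun hv => hy ⟨x, hv, hx⟩
      exact ⟨⟨e, t, ht, hx⟩, rfl⟩
  rw [← (Equiv.ofBijective Φ hΦ).tsum_eq, ENNReal.tsum_sigma']
  rfl

end MetricGraphOn

open MetricGraphOn in
theorem statement11_general (X : Type) [MetricSpace X] (G : MetricGraphOn X)
    (f : X → ℝ)
    (hC1 : ∀ e : G.E, ContDiffOn ℝ 1 (f ∘ G.edgeMap e) (Set.Icc 0 (G.len e)))
    (φ : X → ℝ)
    (hφloc : ∀ e : G.E, IntegrableOn (fun t => φ (G.edgeMap e t)) (Ioo 0 (G.len e))) :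
    (∑' e : G.E, ∫⁻ t in Ioo 0 (G.len e),
        ENNReal.ofReal (φ (G.edgeMap e t) * |G.edgeDeriv f e t|)) =
      ∫⁻ t : ℝ, ∑' x : {x : X | f x = t}, ENNReal.ofReal (φ (x : X)) := by
  have := G.countableE
  have := G.countableV
  set ψ : X → ℝ≥0∞ := fun x => ENNReal.ofReal (φ x)
  have hedge e := ((hC1 e).mono Ioo_subset_Icc_self).lintegral_abs_deriv_mul_eq_lintegral_fiberSum
    (ψ := ψ ∘ G.edgeMap e) isOpen_Ioo (hφloc e).aemeasurable.ennreal_ofReal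
  have hvert : ∀ᵐ y : ℝ, y ∉ f '' range G.vertexMap :=
    measure_eq_zero_iff_ae_notMem.mp (((countable_range _).image f).measure_zero _)
  calc _ = ∑' e, ∫⁻ y, fiberSum (Ioo 0 (G.len e)) (f ∘ G.edgeMap e) (ψ ∘ G.edgeMap e) y :=
        tsum_congr fun e => by
          rw [← (hedge e).2]
          refine lintegral_congr fun t => ?_
          rw [ENNReal.ofReal_mul' (abs_nonneg _), mul_comm]
          rfl
    _ = ∫⁻ y, ∑' e, fiberSum (Ioo 0 (G.len e)) (f ∘ G.edgeMap e) (ψ ∘ G.edgeMap e) y :=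
        (lintegral_tsum fun e => (hedge e).1).symm
    _ = _ := lintegral_congr_ae (hvert.mono fun y hy => G.tsum_fiberSum_edgeMap f ψ hy)

open MetricGraphOn in
/-- Coarea formula for infinite metric graphs. Let `G` be a metric
graph on a countable edge set, let `f` be continuous on `G` and `C¹` on each closed
edge, and let `φ ∈ L¹_loc(G)` be nonnegative. Then
`∫_G φ(x)|f'(x)| dx = ∫_ℝ Σ_{x ∈ S_t} φ(x) dt`, where `S_t = {x : f x = t}`. -/
theorem statement11 (X : Type) [MetricSpace X] (G : MetricGraphOn X)
    (f : X → ℝ) (hf : Continuous f)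
    (hC1 : ∀ e : G.E, ContDiffOn ℝ 1 (f ∘ G.edgeMap e) (Set.Icc 0 (G.len e)))
    (φ : X → ℝ) (hφ0 : ∀ x, 0 ≤ φ x)
    (hφloc : ∀ e : G.E, IntegrableOn (fun t => φ (G.edgeMap e t)) (Ioo 0 (G.len e))) :
    (∑' e : G.E, ∫⁻ t in Ioo 0 (G.len e),
        ENNReal.ofReal (φ (G.edgeMap e t) * |G.edgeDeriv f e t|)) =
      ∫⁻ t : ℝ, ∑' x : {x : X | f x = t}, ENNReal.ofReal (φ (x : X)) :=
  statement11_general X G f hC1 φ hφloc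
end
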